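/- arXiv:2503.08185 — 2 statements merged into one kernel-verified Lean document; each statement's English description precedes it below -/
import Mathlib

section
/- Let Ω ⊆ Ω* be finite sets, π the uniform measure on Ω and μ the uniform measure on Ω*. Let f: Ω → ℝ and define g: Ω* → ℝ by g(x) = f(x) for x ∈ Ω and g(x) = E_π[f] otherwise. Then Ent_π(f²) ≤ (|Ω*|/|Ω|) · Ent_μ(g²). -/
/-!
Write `φ t = t log t`, `A = ∑_Ω f²`, `c = E_π[f]²` and `k = |Ω* \ Ω|`. In the unnormalised
entropies `|Ω| Ent_π(f²) = ∑_Ω φ(f²) - A log (A / |Ω|)` and `|Ω*| Ent_μ(g²)` the terms `φ(f(x)²)`,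
`x ∈ Ω`, cancel, and what remains is the two-point Jensen inequality
`|Ω*| φ((A + k c) / |Ω*|) ≤ |Ω| φ(A / |Ω|) + k φ(c)` for the convex function `φ`.
-/

open Classical Finset Real

lemma add_mul_log_div_add_le {m k x y : ℝ} (hm : 0 ≤ m) (hk : 0 ≤ k) (hmk : 0 < m + k)
    (hx : 0 ≤ x) (hy : 0 ≤ y) :
    (m * x + k * y) * log ((m * x + k * y) / (m + k)) ≤ m * (x * log x) + k * (y * log y) := by
  have hJensen := convexOn_mul_log.2 (Set.mem_Ici.2 hx) (Set.mem_Ici.2 hy)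
    (div_nonneg hm hmk.le) (div_nonneg hk hmk.le) (by field_simp)
  simp only [smul_eq_mul] at hJensen
  have hmean : m / (m + k) * x + k / (m + k) * y = (m * x + k * y) / (m + k) := by
    field_simp
  rw [hmean] at hJensen
  calc (m * x + k * y) * log ((m * x + k * y) / (m + k))
      = (m + k) * ((m * x + k * y) / (m + k) * log ((m * x + k * y) / (m + k))) := by
        field_simp
    _ ≤ (m + k) * (m / (m + k) * (x * log x) + k / (m + k) * (y * log y)) := by gcongr
    _ = m * (x * log x) + k * (y * log y) := by field_simp

section

variable {α : Type*}

noncomputable def uniformEnt (t : Finset α) (h : α → ℝ) : ℝ :=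
  (∑ x ∈ t, h x * log (h x)) / #t - ((∑ x ∈ t, h x) / #t) * log ((∑ x ∈ t, h x) / #t)

lemma uniformEnt_congr {t : Finset α} {h h' : α → ℝ} (hh : Set.EqOn h h' t) :
    uniformEnt t h = uniformEnt t h' := by
  unfold uniformEnt
  rw [sum_congr rfl fun x hx => hh hx, sum_congr rfl fun x hx => by rw [hh hx]]

lemma card_mul_uniformEnt (t : Finset α) (h : α → ℝ) :
    #t * uniformEnt t h =
      ∑ x ∈ t, h x * log (h x) - (∑ x ∈ t, h x) * log ((∑ x ∈ t, h x) / #t) := by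
  rcases t.eq_empty_or_nonempty with rfl | ht
  · simp
  · have : (#t : ℝ) ≠ 0 := by positivity
    unfold uniformEnt
    field_simp

lemma card_mul_uniformEnt_le_of_subset {t u : Finset α} {h : α → ℝ} {c : ℝ}
    (htu : t ⊆ u) (ht : t.Nonempty) (hh : ∀ x ∈ t, 0 ≤ h x) (hc : 0 ≤ c)
    (hconst : ∀ x ∈ u \ t, h x = c) :
    #t * uniformEnt t h ≤ #u * uniformEnt u h := by
  have hsplit (φ : ℝ → ℝ) : ∑ x ∈ u, φ (h x) = ∑ x ∈ t, φ (h x) + #(u \ t) * φ c := by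
    rw [← sum_sdiff htu, sum_congr rfl fun x hx => by rw [hconst x hx], sum_const,
      nsmul_eq_mul, add_comm]
  have hcard : (#u : ℝ) = #t + #(u \ t) := by
    rw [← card_sdiff_add_card_eq_card htu]; push_cast; ring
  rw [card_mul_uniformEnt, card_mul_uniformEnt, hsplit fun y => y * log y, hsplit fun y => y,
    hcard]
  set m : ℝ := (#t : ℝ)
  set k : ℝ := (#(u \ t) : ℝ)
  set A := ∑ x ∈ t, h x
  have hm : 0 < m := by positivity
  have hJensen := add_mul_log_div_add_le (x := A / m) (k := k) hm.le (by positivity)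
    (by positivity) (div_nonneg (sum_nonneg hh) hm.le) hc
  rw [← mul_assoc, mul_div_cancel₀ A hm.ne'] at hJensen
  linarith

end

/-- Extension lemma for entropies: if `π` is uniform on a nonempty subset `s` of a
finite set `α` and `μ` is uniform on `α`, and `g` extends `f` by the `π`-mean of `f`
outside `s`, then `Ent_π(f²) ≤ (|α|/|s|) · Ent_μ(g²)`. -/
theorem entropy_extension (α : Type*) [Fintype α] (s : Finset α) (hs : s.Nonempty)
    (f : α → ℝ) :
    let m : ℝ := s.card
    let N : ℝ := Fintype.card α
    let Ef : ℝ := (∑ x ∈ s, f x) / m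
    let g : α → ℝ := fun x => if x ∈ s then f x else Ef
    let Entπ : ℝ := (∑ x ∈ s, f x ^ 2 * Real.log (f x ^ 2)) / m -
      ((∑ x ∈ s, f x ^ 2) / m) * Real.log ((∑ x ∈ s, f x ^ 2) / m)
    let Entμ : ℝ := (∑ x, g x ^ 2 * Real.log (g x ^ 2)) / N -
      ((∑ x, g x ^ 2) / N) * Real.log ((∑ x, g x ^ 2) / N)
    Entπ ≤ (N / m) * Entμ := by
  intro m N Ef g Entπ Entμ
  have hπ : Entπ = uniformEnt s fun x => g x ^ 2 :=
    uniformEnt_congr fun x hx => by simp only [g, if_pos (mem_coe.1 hx)]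
  have hμ : Entμ = uniformEnt univ fun x => g x ^ 2 := rfl
  have hm : (0 : ℝ) < m := by simp only [m]; positivity
  have key := card_mul_uniformEnt_le_of_subset (subset_univ s) hs
    (fun x _ => sq_nonneg (g x)) (sq_nonneg Ef) fun x hx => by
      simp only [g, if_neg (mem_sdiff.1 hx).2]
  rw [hπ, hμ, div_mul_eq_mul_div, le_div_iff₀ hm, mul_comm]
  exact key
end

section
/- Subadditivity of entropy for product measures: if μ = μ_1 ⊗ ... ⊗ μ_n is a product probability measure on a finite product space Ω_1 × ... × Ω_n, and h is a nonnegative function on the product, then Ent_μ(h) ≤ Σ_{i=1}^n E_μ[ Ent_{μ_i}(h | coordinates other than i) ], where the inner entropy is with respect to the i-th coordinate with the others fixed. -/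
/-!
Average out the coordinates one at a time: `F₀ = h` and `F_{k+1} = E_{μ_k}[F_k | x_j, j ≠ k]`.
Because `μ` is a product measure each step preserves `E_μ`, which gives the chain rule
`Ent_μ(F_k) = Ent_μ(F_{k+1}) + E_μ[Ent_{μ_k}(F_k | x_j, j ≠ k)]`. The last `F_n` is constant, so
`Ent_μ(h)` telescopes into a sum of conditional entropies. Finally, the variational inequality
`E[h log f] - E[h] log E[f] ≤ Ent(h)` makes `Ent_{μ_i}` convex and positively homogeneous, so
averaging over a coordinate `j ≠ i` can only decrease `E_μ[Ent_{μ_i}(· | x_j, j ≠ i)]`; hence the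
`k`-th term is at most `E_μ[Ent_{μ_k}(h | x_j, j ≠ k)]`.
-/

/-- Entropy of a nonnegative function `h` with respect to a weight function `w`
(a probability mass function) on a finite type, with the convention `0 log 0 = 0`
(`Real.log 0 = 0`). -/
noncomputable def finEnt {α : Type*} [Fintype α] (w : α → ℝ) (h : α → ℝ) : ℝ :=
  ∑ x, w x * h x * Real.log (h x) -
    (∑ x, w x * h x) * Real.log (∑ x, w x * h x)

open Finset Real Function

section Entropy

variable {α : Type*} [Fintype α]

theorem sum_mul_log_sub_le_finEnt (w h f : α → ℝ) (hw : 0 ≤ w) (hh : 0 ≤ h) (hf : 0 ≤ f)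
    (hpos : ∀ a, 0 < h a → 0 < f a) :
    ∑ a, w a * h a * log (f a) - (∑ a, w a * h a) * log (∑ a, w a * f a) ≤ finEnt w h := by
  have hwh : ∀ a, 0 ≤ w a * h a := fun a => mul_nonneg (hw a) (hh a)
  rcases (sum_nonneg fun a _ => hwh a : 0 ≤ ∑ a, w a * h a).eq_or_lt with hs | hs
  · have hzero : ∀ a, w a * h a = 0 := fun a =>
      (sum_eq_zero_iff_of_nonneg fun a _ => hwh a).1 hs.symm a (mem_univ a)
    simp [finEnt, hzero]
  obtain ⟨b, -, hb⟩ := exists_lt_of_sum_lt (s := univ) (f := fun _ => (0 : ℝ))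
    (g := fun a => w a * h a) (by simpa using hs)
  set s := ∑ a, w a * h a
  set F := ∑ a, w a * f a
  have hF : 0 < F :=
    (mul_pos (pos_of_mul_pos_left hb (hh b)) (hpos b (pos_of_mul_pos_right hb (hw b)))).trans_le
      (single_le_sum (fun a _ => mul_nonneg (hw a) (hf a)) (mem_univ b))
  -- `log t ≤ t - 1` at `t = f s / (h F)`, weighted by `w h`
  have pointwise : ∀ a, w a * h a * (log (f a) - log (h a) + (log s - log F))
      ≤ s / F * (w a * f a) - w a * h a := by
    intro a
    rcases (hwh a).eq_or_lt with h0 | hwha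
    · rw [← h0, zero_mul, sub_zero]
      exact mul_nonneg (div_nonneg hs.le hF.le) (mul_nonneg (hw a) (hf a))
    have hha : 0 < h a := pos_of_mul_pos_right hwha (hw a)
    have hfa := hpos a hha
    have hlog : log (f a) - log (h a) + (log s - log F) = log (f a * s / (h a * F)) := by
      rw [log_div (by positivity) (by positivity), log_mul hfa.ne' hs.ne',
        log_mul hha.ne' hF.ne']
      ring
    calc w a * h a * (log (f a) - log (h a) + (log s - log F))
        ≤ w a * h a * (f a * s / (h a * F) - 1) := by
          rw [hlog]
          exact mul_le_mul_of_nonneg_left (log_le_sub_one_of_pos (by positivity)) hwha.le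
      _ = s / F * (w a * f a) - w a * h a := by field_simp
  have hsum := sum_le_sum fun a (_ : a ∈ univ) => pointwise a
  rw [sum_sub_distrib, ← mul_sum, div_mul_cancel₀ _ hF.ne', sub_self] at hsum
  have expand : ∑ a, w a * h a * (log (f a) - log (h a) + (log s - log F)) =
      ∑ a, w a * h a * log (f a) - ∑ a, w a * h a * log (h a) + s * (log s - log F) := by
    simp only [mul_add, mul_sub, sum_add_distrib, sum_sub_distrib, ← sum_mul]
    rfl
  unfold finEnt
  linarith

theorem finEnt_sum_mul_le {β : Type*} [Fintype β] (w : α → ℝ) (hw : 0 ≤ w) (c : β → ℝ)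
    (hc : 0 ≤ c) (H : β → α → ℝ) (hH : ∀ b, 0 ≤ H b) :
    finEnt w (fun a => ∑ b, c b * H b a) ≤ ∑ b, c b * finEnt w (H b) := by
  set f := fun a => ∑ b, c b * H b a with hf_def
  have hf : 0 ≤ f := fun a => sum_nonneg fun b _ => mul_nonneg (hc b) (hH b a)
  have split : finEnt w f = ∑ b, c b *
      (∑ a, w a * H b a * log (f a) - (∑ a, w a * H b a) * log (∑ a, w a * f a)) := by
    have mix : ∀ g : α → ℝ, ∑ a, w a * f a * g a = ∑ b, c b * ∑ a, w a * H b a * g a := by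
      intro g
      simp only [hf_def, mul_sum, sum_mul]
      rw [sum_comm]
      exact sum_congr rfl fun b _ => sum_congr rfl fun a _ => by ring
    have hF := mix 1
    simp only [Pi.one_apply, mul_one] at hF
    rw [finEnt, mix, hF, sum_mul, ← sum_sub_distrib]
    simp only [mul_sub, mul_assoc]
  rw [split]
  refine sum_le_sum fun b _ => ?_
  rcases (hc b).eq_or_lt with h0 | hcb
  · simp [← h0]
  refine mul_le_mul_of_nonneg_left
    (sum_mul_log_sub_le_finEnt w (H b) f hw (hH b) hf fun a ha => ?_) hcb.le
  exact (mul_pos hcb ha).trans_le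
    (single_le_sum (fun b' _ => mul_nonneg (hc b') (hH b' a)) (mem_univ b))

theorem finEnt_eq_zero_of_forall_eq (w G : α → ℝ) (hw : ∑ a, w a = 1)
    (hG : ∀ a b, G a = G b) : finEnt w G = 0 := by
  have hconst : ∀ a, G a = ∑ b, w b * G b := fun a =>
    calc G a = (∑ b, w b) * G a := by rw [hw, one_mul]
      _ = ∑ b, w b * G b := by rw [sum_mul]; exact sum_congr rfl fun b _ => by rw [hG a b]
  obtain ⟨c, hc⟩ : ∃ c, ∀ a, G a = c := ⟨_, hconst⟩
  simp only [finEnt, hc, ← sum_mul, hw, one_mul, sub_self]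

end Entropy

theorem prod_update_mul {ι : Type*} [Fintype ι] [DecidableEq ι] {Ω : ι → Type*}
    (μ : ∀ i, Ω i → ℝ) (x : ∀ i, Ω i) (i : ι) (y : Ω i) :
    (∏ j, μ j (update x i y j)) * μ i (x i) = (∏ j, μ j (x j)) * μ i y := by
  have off_i : ∏ j ∈ univ.erase i, μ j (update x i y j) = ∏ j ∈ univ.erase i, μ j (x j) :=
    prod_congr rfl fun j hj => by rw [update_of_ne (ne_of_mem_erase hj)]
  rw [← mul_prod_erase univ _ (mem_univ i),
    ← mul_prod_erase univ (fun j => μ j (x j)) (mem_univ i), off_i, update_self]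
  ring

section Product

variable {ι : Type*} [DecidableEq ι] {Ω : ι → Type*} [∀ i, Fintype (Ω i)]
  (μ : ∀ i, Ω i → ℝ)

-- `condAvg μ i F` is `E_{μ_i}[F | x_j, j ≠ i]` and `condEnt μ i F` is `Ent_{μ_i}(F | x_j, j ≠ i)`.
noncomputable def condAvg (i : ι) (F : (∀ i, Ω i) → ℝ) (x : ∀ i, Ω i) : ℝ :=
  ∑ y, μ i y * F (update x i y)

noncomputable def condEnt (i : ι) (F : (∀ i, Ω i) → ℝ) (x : ∀ i, Ω i) : ℝ :=
  finEnt (μ i) fun y => F (update x i y)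

theorem sum_prod_mul_condAvg [Fintype ι] {i : ι} (hμ1 : ∑ y, μ i y = 1)
    (F : (∀ i, Ω i) → ℝ) :
    ∑ x, (∏ j, μ j (x j)) * condAvg μ i F x = ∑ x, (∏ j, μ j (x j)) * F x := by
  let σ : Equiv.Perm ((∀ j, Ω j) × Ω i) :=
    Involutive.toPerm (fun p => (update p.1 i p.2, p.1 i)) fun p => by simp
  calc ∑ x, (∏ j, μ j (x j)) * condAvg μ i F x
      = ∑ p : (∀ j, Ω j) × Ω i, (∏ j, μ j (p.1 j)) * μ i p.2 * F (update p.1 i p.2) := by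
        simp only [condAvg, mul_sum, Fintype.sum_prod_type, mul_assoc]
    _ = ∑ p : (∀ j, Ω j) × Ω i, (∏ j, μ j (update p.1 i p.2 j)) * μ i (p.1 i) * F p.1 := by
        refine Fintype.sum_equiv σ _ _ fun p => ?_
        change _ = (∏ j, μ j (update (update p.1 i p.2) i (p.1 i) j)) *
          μ i (update p.1 i p.2 i) * F (update p.1 i p.2)
        simp only [update_idem, update_eq_self, update_self]
    _ = ∑ x, (∏ j, μ j (x j)) * F x := by
        simp only [prod_update_mul, Fintype.sum_prod_type, mul_right_comm _ (μ i _),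
          ← mul_sum, hμ1, mul_one]

theorem condAvg_nonneg (hμ0 : ∀ i, 0 ≤ μ i) (i : ι) {F : (∀ i, Ω i) → ℝ} (hF : 0 ≤ F) :
    0 ≤ condAvg μ i F := fun _ => sum_nonneg fun y _ => mul_nonneg (hμ0 i y) (hF _)

theorem condEnt_eq_condAvg_sub (i : ι) (F : (∀ i, Ω i) → ℝ) (x : ∀ i, Ω i) :
    condEnt μ i F x = condAvg μ i (fun z => F z * log (F z)) x -
      condAvg μ i F x * log (condAvg μ i F x) := by
  simp only [condEnt, finEnt, condAvg, mul_assoc]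

theorem finEnt_eq_finEnt_condAvg_add [Fintype ι] {i : ι} (hμ1 : ∑ y, μ i y = 1)
    (F : (∀ i, Ω i) → ℝ) : finEnt (fun x => ∏ j, μ j (x j)) F =
      finEnt (fun x => ∏ j, μ j (x j)) (condAvg μ i F) +
        ∑ x, (∏ j, μ j (x j)) * condEnt μ i F x := by
  have hF := sum_prod_mul_condAvg μ hμ1 F
  have hFlogF := sum_prod_mul_condAvg μ hμ1 fun z => F z * log (F z)
  simp only [finEnt, condEnt_eq_condAvg_sub, mul_sub, sum_sub_distrib, hF, hFlogF, mul_assoc]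
  ring

theorem condEnt_condAvg_le (hμ0 : ∀ i, 0 ≤ μ i) {i j : ι} (hij : i ≠ j) {F : (∀ i, Ω i) → ℝ}
    (hF : 0 ≤ F) (x : ∀ i, Ω i) :
    condEnt μ i (condAvg μ j F) x ≤ condAvg μ j (condEnt μ i F) x := by
  simp only [condEnt, condAvg, update_comm hij]
  exact finEnt_sum_mul_le _ (hμ0 i) _ (hμ0 j) _ fun z y => hF _

theorem sum_prod_mul_condEnt_condAvg_le [Fintype ι] (hμ0 : ∀ i, 0 ≤ μ i) {i j : ι}
    (hμ1 : ∑ y, μ j y = 1) (hij : i ≠ j) {F : (∀ i, Ω i) → ℝ} (hF : 0 ≤ F) :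
    ∑ x, (∏ k, μ k (x k)) * condEnt μ i (condAvg μ j F) x ≤
      ∑ x, (∏ k, μ k (x k)) * condEnt μ i F x :=
  calc ∑ x, (∏ k, μ k (x k)) * condEnt μ i (condAvg μ j F) x
      ≤ ∑ x, (∏ k, μ k (x k)) * condAvg μ j (condEnt μ i F) x :=
        sum_le_sum fun x _ => mul_le_mul_of_nonneg_left (condEnt_condAvg_le μ hμ0 hij hF x)
          (prod_nonneg fun k _ => hμ0 k _)
    _ = ∑ x, (∏ k, μ k (x k)) * condEnt μ i F x := sum_prod_mul_condAvg μ hμ1 _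

theorem finEnt_le_sum_condEnt_add_finEnt_foldl [Fintype ι] (hμ0 : ∀ i, 0 ≤ μ i)
    (hμ1 : ∀ i, ∑ y, μ i y = 1) :
    ∀ (l : List ι), l.Nodup → ∀ F : (∀ i, Ω i) → ℝ, 0 ≤ F →
      finEnt (fun x => ∏ j, μ j (x j)) F ≤
        (l.map fun i => ∑ x, (∏ j, μ j (x j)) * condEnt μ i F x).sum +
          finEnt (fun x => ∏ j, μ j (x j)) (l.foldl (fun G i => condAvg μ i G) F)
  | [], _, F, _ => by simp
  | i :: l, hl, F, hF => by
    rw [List.nodup_cons] at hl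
    have ih := finEnt_le_sum_condEnt_add_finEnt_foldl hμ0 hμ1 l hl.2 (condAvg μ i F)
      (condAvg_nonneg μ hμ0 i hF)
    have averaging_decreases :
        (l.map fun j => ∑ x, (∏ k, μ k (x k)) * condEnt μ j (condAvg μ i F) x).sum ≤
          (l.map fun j => ∑ x, (∏ k, μ k (x k)) * condEnt μ j F x).sum :=
      List.sum_le_sum fun j hj => sum_prod_mul_condEnt_condAvg_le μ hμ0 (hμ1 i)
        (ne_of_mem_of_not_mem hj hl.1) hF
    rw [finEnt_eq_finEnt_condAvg_add μ (hμ1 i) F, List.map_cons, List.sum_cons, List.foldl_cons]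
    linarith

theorem dependsOn_condAvg {F : (∀ i, Ω i) → ℝ} {s : Set ι} (hF : DependsOn F s) (i : ι) :
    DependsOn (condAvg μ i F) (s \ {i}) := fun x x' hxx' => by
  refine sum_congr rfl fun y _ => congrArg _ (hF fun j hj => ?_)
  rcases eq_or_ne j i with rfl | hji
  · simp
  · simp [update_of_ne hji, hxx' j ⟨hj, hji⟩]

theorem dependsOn_foldl_condAvg (l : List ι) {F : (∀ i, Ω i) → ℝ} {s : Set ι}
    (hF : DependsOn F s) :
    DependsOn (l.foldl (fun G i => condAvg μ i G) F) (s \ {i | i ∈ l}) := by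
  induction l generalizing F s with
  | nil => simpa using hF
  | cons i l ih =>
    refine (ih (dependsOn_condAvg μ hF i)).mono fun j hj => ?_
    simp only [Set.mem_sdiff, Set.mem_singleton_iff, Set.mem_ofPred_eq, List.mem_cons] at hj ⊢
    tauto

theorem foldl_condAvg_eq_of_forall_mem {l : List ι} (hl : ∀ i, i ∈ l) (F : (∀ i, Ω i) → ℝ)
    (x y : ∀ i, Ω i) :
    l.foldl (fun G i => condAvg μ i G) F x = l.foldl (fun G i => condAvg μ i G) F y :=
  (dependsOn_foldl_condAvg μ l (dependsOn_univ F)).mono (fun j hj => (hj.2 (hl j)).elim)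
    |>.empty x y

end Product

theorem entropy_subadditive_product_general (n : ℕ) (Ω : Fin n → Type*)
    [∀ i, Fintype (Ω i)]
    (μ : ∀ i, Ω i → ℝ) (hμ0 : ∀ i x, 0 ≤ μ i x) (hμ1 : ∀ i, ∑ x, μ i x = 1)
    (h : (∀ i, Ω i) → ℝ) (hh : ∀ x, 0 ≤ h x) :
    finEnt (fun x => ∏ i, μ i (x i)) h ≤
      ∑ i, ∑ x : ∀ i, Ω i, (∏ j, μ j (x j)) *
        finEnt (μ i) (fun y => h (Function.update x i y)) := by
  have hw : ∑ x : ∀ i, Ω i, ∏ i, μ i (x i) = 1 := by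
    rw [← Fintype.prod_sum]; simp [hμ1]
  have htel :=
    finEnt_le_sum_condEnt_add_finEnt_foldl μ hμ0 hμ1 univ.toList (nodup_toList _) h hh
  rwa [finEnt_eq_zero_of_forall_eq _ _ hw (foldl_condAvg_eq_of_forall_mem μ (by simp) h),
    add_zero, sum_map_toList] at htel

/-- Subadditivity of entropy for product measures: for a product probability measure
`μ = μ_1 ⊗ ⋯ ⊗ μ_n` on a finite product space and a nonnegative function `h`,
`Ent_μ(h) ≤ Σ_i E_μ[Ent_{μ_i}(h | coordinates ≠ i)]`. -/
theorem entropy_subadditive_product (n : ℕ) (Ω : Fin n → Type*)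
    [∀ i, Fintype (Ω i)] [∀ i, DecidableEq (Ω i)]
    (μ : ∀ i, Ω i → ℝ) (hμ0 : ∀ i x, 0 ≤ μ i x) (hμ1 : ∀ i, ∑ x, μ i x = 1)
    (h : (∀ i, Ω i) → ℝ) (hh : ∀ x, 0 ≤ h x) :
    finEnt (fun x => ∏ i, μ i (x i)) h ≤
      ∑ i, ∑ x : ∀ i, Ω i, (∏ j, μ j (x j)) *
        finEnt (μ i) (fun y => h (Function.update x i y)) :=
  entropy_subadditive_product_general n Ω μ hμ0 hμ1 h hh
end
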